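/- arXiv:1705.06206 — 2 statements merged into one kernel-verified Lean document; each statement's English description precedes it below -/
import Mathlib

section
/- Let R be a commutative ring which is free as a Z-module with finite basis {x_i}_{i∈Π} having nonnegative integer structure constants. Then any ring homomorphism φ : R → R with φ(x_i) > 0 for all i sends each basis element x_i to an eigenvalue of the fusion matrix N_i; in particular, the Frobenius–Perron dimension map FPdim, taking x_i to the spectral radius of N_i, is the unique ring homomorphism R → R that is positive on every basis element. -/
open Finset


theorem perron_positive {n : Type*} [Fintype n] [DecidableEq n] [Nonempty n]
    (A : Matrix n n ℝ) (hA : ∀ k j, 0 < A k j) :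
    ∃ (lam : ℝ) (u : n → ℝ), 0 < lam ∧ (∀ k, 0 < u k) ∧ A.mulVec u = lam • u ∧
      ∀ w : n → ℝ, A.mulVec w = lam • w → ∃ c : ℝ, w = c • u := by
  classical
  set R : ℝ := ∑ k, ∑ j, A k j with hR
  have hRpos : 0 < R := Finset.sum_pos (fun k _ => Finset.sum_pos (fun j _ => hA k j) univ_nonempty) univ_nonempty
  set T : ℝ := (Fintype.card n : ℝ) * R with hT
  have hcardpos : (0:ℝ) < (Fintype.card n : ℝ) := by exact_mod_cast Fintype.card_pos
  have hTpos : 0 < T := mul_pos hcardpos hRpos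
  have hmv : ∀ (x : n → ℝ) k, A.mulVec x k = ∑ j, A k j * x j := fun x k => rfl
  -- any admissible (t, x) has t ≤ T
  have hTbound : ∀ (t : ℝ) (x : n → ℝ), (∀ k, 0 ≤ x k) → (∑ k, x k) = 1 →
      (∀ k, t * x k ≤ A.mulVec x k) → t ≤ T := by
    intro t x hx hxs hle
    rcases le_or_gt t 0 with h | h
    · exact h.trans hTpos.le
    · have hxle1 : ∀ j, x j ≤ 1 := by
        intro j
        calc x j ≤ ∑ k, x k := Finset.single_le_sum (fun k _ => hx k) (mem_univ j)
        _ = 1 := hxs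
      have hek : ∃ k, (Fintype.card n : ℝ)⁻¹ ≤ x k := by
        by_contra hc
        push_neg at hc
        have h2 : (∑ k, x k) < ∑ _k : n, (Fintype.card n : ℝ)⁻¹ :=
          Finset.sum_lt_sum_of_nonempty univ_nonempty (fun k _ => hc k)
        rw [hxs] at h2
        simp only [Finset.sum_const, card_univ, nsmul_eq_mul] at h2
        rw [mul_inv_cancel₀ hcardpos.ne'] at h2
        exact lt_irrefl _ h2
      obtain ⟨k, hk⟩ := hek
      have h1 : A.mulVec x k ≤ R := by
        rw [hmv]
        calc ∑ j, A k j * x j ≤ ∑ j, A k j := by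
              apply Finset.sum_le_sum
              intro j _
              nlinarith [hA k j, hxle1 j, hx j]
        _ ≤ R := Finset.single_le_sum (f := fun k => ∑ j, A k j)
              (fun k _ => Finset.sum_nonneg fun j _ => (hA k j).le) (mem_univ k)
      have h2 : t * (Fintype.card n : ℝ)⁻¹ ≤ t * x k := mul_le_mul_of_nonneg_left hk h.le
      have h3 : t * (Fintype.card n : ℝ)⁻¹ ≤ R := le_trans h2 ((hle k).trans h1)
      calc t = t * (Fintype.card n : ℝ)⁻¹ * (Fintype.card n : ℝ) := by field_simp
      _ ≤ R * (Fintype.card n : ℝ) := mul_le_mul_of_nonneg_right h3 hcardpos.le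
      _ = T := by rw [hT]; ring
  have hAxpos : ∀ x : n → ℝ, (∀ k, 0 ≤ x k) → (∃ j, 0 < x j) → ∀ k, 0 < A.mulVec x k := by
    intro x hx hj k
    obtain ⟨j, hj⟩ := hj
    rw [hmv]
    exact Finset.sum_pos' (fun m _ => mul_nonneg (hA k m).le (hx m))
      ⟨j, mem_univ j, mul_pos (hA k j) hj⟩
  set C : Set (ℝ × (n → ℝ)) :=
    {p | p.1 ∈ Set.Icc 0 T ∧ (∀ k, 0 ≤ p.2 k) ∧ (∑ k, p.2 k) = 1 ∧
      ∀ k, p.1 * p.2 k ≤ A.mulVec p.2 k} with hC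
  have hmVc : ∀ k, Continuous fun p : ℝ × (n → ℝ) => A.mulVec p.2 k := by
    intro k
    have h : (fun p : ℝ × (n → ℝ) => A.mulVec p.2 k) = fun p => ∑ j, A k j * p.2 j := rfl
    rw [h]
    exact continuous_finset_sum _ fun j _ =>
      continuous_const.mul ((continuous_apply j).comp continuous_snd)
  have hCclosed : IsClosed C := by
    have h1 : IsClosed {p : ℝ × (n → ℝ) | p.1 ∈ Set.Icc 0 T} :=
      isClosed_Icc.preimage continuous_fst
    have h2 : IsClosed {p : ℝ × (n → ℝ) | ∀ k, 0 ≤ p.2 k} := by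
      have h : {p : ℝ × (n → ℝ) | ∀ k, 0 ≤ p.2 k} = ⋂ k, {p | 0 ≤ p.2 k} := by ext p; simp
      rw [h]
      exact isClosed_iInter fun k =>
        isClosed_le continuous_const ((continuous_apply k).comp continuous_snd)
    have h3 : IsClosed {p : ℝ × (n → ℝ) | (∑ k, p.2 k) = 1} :=
      isClosed_eq (continuous_finset_sum _ fun k _ => (continuous_apply k).comp continuous_snd)
        continuous_const
    have h4 : IsClosed {p : ℝ × (n → ℝ) | ∀ k, p.1 * p.2 k ≤ A.mulVec p.2 k} := by
      have h : {p : ℝ × (n → ℝ) | ∀ k, p.1 * p.2 k ≤ A.mulVec p.2 k}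
          = ⋂ k, {p | p.1 * p.2 k ≤ A.mulVec p.2 k} := by ext p; simp
      rw [h]
      exact isClosed_iInter fun k =>
        isClosed_le (continuous_fst.mul ((continuous_apply k).comp continuous_snd)) (hmVc k)
    exact h1.inter (h2.inter (h3.inter h4))
  have hCsub : C ⊆ (Set.Icc (0:ℝ) T) ×ˢ (Set.Icc (0 : n → ℝ) 1) := by
    rintro ⟨t, x⟩ ⟨ht, hx, hxs, _⟩
    refine ⟨ht, fun k => hx k, fun k => ?_⟩
    calc x k ≤ ∑ j, x j := Finset.single_le_sum (fun j _ => hx j) (mem_univ k)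
    _ = 1 := hxs
  have hCcpt : IsCompact C :=
    ((isCompact_Icc).prod (isCompact_Icc)).of_isClosed_subset hCclosed hCsub
  -- C is nonempty
  set x₀ : n → ℝ := fun _ => (Fintype.card n : ℝ)⁻¹ with hx₀
  have hx₀nn : ∀ k, 0 ≤ x₀ k := fun k => by positivity
  have hx₀s : (∑ k, x₀ k) = 1 := by
    simp [hx₀, Finset.sum_const, card_univ, nsmul_eq_mul, mul_inv_cancel₀ hcardpos.ne']
  have hC0 : (0, x₀) ∈ C := by
    refine ⟨⟨le_refl 0, hTpos.le⟩, hx₀nn, hx₀s, fun k => ?_⟩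
    simp only [zero_mul]
    rw [hmv]
    exact Finset.sum_nonneg fun j _ => mul_nonneg (hA k j).le (hx₀nn j)
  obtain ⟨⟨lam, u⟩, hpC, hpmax⟩ := hCcpt.exists_isMaxOn ⟨_, hC0⟩ continuous_fst.continuousOn
  obtain ⟨hlamIcc, hunn, hus, hule⟩ := hpC
  have humax : ∀ t x, (t, x) ∈ C → t ≤ lam := fun t x h => hpmax h
  have huj : ∃ j, 0 < u j := by
    by_contra hc
    push_neg at hc
    have : (∑ k, u k) = 0 := le_antisymm (Finset.sum_nonpos fun k _ => hc k)
      (Finset.sum_nonneg fun k _ => hunn k)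
    rw [hus] at this; norm_num at this
  -- lam is positive
  have hlampos : 0 < lam := by
    set b : ℝ := univ.inf' univ_nonempty (fun k => A.mulVec x₀ k) with hb
    have hbpos : 0 < b := by
      obtain ⟨k, _, hk⟩ := Finset.exists_mem_eq_inf' univ_nonempty (fun k => A.mulVec x₀ k)
      rw [hb, hk]
      exact hAxpos x₀ hx₀nn ⟨Classical.arbitrary n, by rw [hx₀]; positivity⟩ k
    have hmem : (b * (Fintype.card n : ℝ), x₀) ∈ C := by
      have hle : ∀ k, b * (Fintype.card n : ℝ) * x₀ k ≤ A.mulVec x₀ k := by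
        intro k
        have : b * (Fintype.card n : ℝ) * x₀ k = b := by
          rw [hx₀]; field_simp
        rw [this]
        exact Finset.inf'_le _ (mem_univ k)
      exact ⟨⟨by positivity, hTbound _ _ hx₀nn hx₀s hle⟩, hx₀nn, hx₀s, hle⟩
    have := humax _ _ hmem
    calc (0:ℝ) < b * (Fintype.card n : ℝ) := by positivity
    _ ≤ lam := this
  -- A u = lam u
  have hAu : A.mulVec u = lam • u := by
    by_contra hne
    set z : n → ℝ := A.mulVec u - lam • u with hz
    have hznn : ∀ k, 0 ≤ z k := by
      intro k
      have := hule k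
      simp only [hz, Pi.sub_apply, Pi.smul_apply, smul_eq_mul, sub_nonneg]
      linarith
    have hzne : ∃ j, 0 < z j := by
      by_contra hc
      push_neg at hc
      apply hne
      have : z = 0 := funext fun k => le_antisymm (hc k) (hznn k)
      rw [hz, sub_eq_zero] at this
      exact this
    set y : n → ℝ := A.mulVec u with hy
    have hypos : ∀ k, 0 < y k := hAxpos u hunn huj
    have hAzpos : ∀ k, 0 < A.mulVec z k := hAxpos z hznn hzne
    have hAy : ∀ k, A.mulVec y k = lam * y k + A.mulVec z k := by
      intro k
      have : y = lam • u + z := by rw [hz]; abel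
      calc A.mulVec y k = A.mulVec (lam • u + z) k := by rw [← this]
      _ = lam * A.mulVec u k + A.mulVec z k := by
            rw [Matrix.mulVec_add, Matrix.mulVec_smul]
            simp [smul_eq_mul]
      _ = lam * y k + A.mulVec z k := by rw [hy]
    set ε : ℝ := univ.inf' univ_nonempty (fun k => A.mulVec z k / y k) with hε
    have hεpos : 0 < ε := by
      obtain ⟨k, _, hk⟩ := Finset.exists_mem_eq_inf' univ_nonempty (fun k => A.mulVec z k / y k)
      rw [hε, hk]
      exact div_pos (hAzpos k) (hypos k)
    have hAyge : ∀ k, (lam + ε) * y k ≤ A.mulVec y k := by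
      intro k
      have h1 : ε ≤ A.mulVec z k / y k := Finset.inf'_le _ (mem_univ k)
      have h2 : ε * y k ≤ A.mulVec z k := by
        rw [← div_mul_cancel₀ (A.mulVec z k) (hypos k).ne']
        exact mul_le_mul_of_nonneg_right h1 (hypos k).le
      rw [hAy k]; nlinarith
    set s : ℝ := ∑ k, y k with hs
    have hspos : 0 < s := Finset.sum_pos (fun k _ => hypos k) univ_nonempty
    set x₁ : n → ℝ := s⁻¹ • y with hx₁
    have hx₁nn : ∀ k, 0 ≤ x₁ k := fun k => by
      simp only [hx₁, Pi.smul_apply, smul_eq_mul]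
      exact mul_nonneg (inv_nonneg.mpr hspos.le) (hypos k).le
    have hx₁s : (∑ k, x₁ k) = 1 := by
      simp only [hx₁, Pi.smul_apply, smul_eq_mul, ← Finset.mul_sum, ← hs]
      exact inv_mul_cancel₀ hspos.ne'
    have hx₁le : ∀ k, (lam + ε) * x₁ k ≤ A.mulVec x₁ k := by
      intro k
      have : A.mulVec x₁ k = s⁻¹ * A.mulVec y k := by
        rw [hx₁, Matrix.mulVec_smul]; simp [smul_eq_mul]
      rw [this]
      simp only [hx₁, Pi.smul_apply, smul_eq_mul]
      have := hAyge k
      have hsinv : 0 ≤ s⁻¹ := by positivity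
      nlinarith
    have hmem : (lam + ε, x₁) ∈ C :=
      ⟨⟨by positivity, hTbound _ _ hx₁nn hx₁s hx₁le⟩, hx₁nn, hx₁s, hx₁le⟩
    have := humax _ _ hmem
    linarith
  have hupos : ∀ k, 0 < u k := by
    intro k
    have h1 : 0 < A.mulVec u k := hAxpos u hunn huj k
    rw [hAu] at h1
    simp only [Pi.smul_apply, smul_eq_mul] at h1
    nlinarith [hunn k]
  refine ⟨lam, u, hlampos, hupos, hAu, ?_⟩
  intro w hw
  set c : ℝ := univ.inf' univ_nonempty (fun k => w k / u k) with hc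
  obtain ⟨k₀, _, hk₀⟩ := Finset.exists_mem_eq_inf' univ_nonempty (fun k => w k / u k)
  set z : n → ℝ := w - c • u with hz
  have hznn : ∀ k, 0 ≤ z k := by
    intro k
    have h1 : c ≤ w k / u k := Finset.inf'_le _ (mem_univ k)
    have h2 : c * u k ≤ w k := by
      rw [← div_mul_cancel₀ (w k) (hupos k).ne']
      exact mul_le_mul_of_nonneg_right h1 (hupos k).le
    simp only [hz, Pi.sub_apply, Pi.smul_apply, smul_eq_mul, sub_nonneg]
    exact h2
  have hzk₀ : z k₀ = 0 := by
    simp only [hz, Pi.sub_apply, Pi.smul_apply, smul_eq_mul]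
    rw [hc, hk₀, div_mul_cancel₀ _ (hupos k₀).ne']
    ring
  have hAz : A.mulVec z = lam • z := by
    rw [hz, Matrix.mulVec_sub, Matrix.mulVec_smul, hw, hAu, smul_sub, smul_comm]
  have hz0 : z = 0 := by
    by_contra hne
    have hzj : ∃ j, 0 < z j := by
      by_contra hcon
      push_neg at hcon
      exact hne (funext fun k => le_antisymm (hcon k) (hznn k))
    have h1 : 0 < A.mulVec z k₀ := hAxpos z hznn hzj k₀
    rw [hAz] at h1
    simp only [Pi.smul_apply, smul_eq_mul, hzk₀, mul_zero] at h1
    exact lt_irrefl _ h1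
  refine ⟨c, ?_⟩
  rw [hz, sub_eq_zero] at hz0
  exact hz0


section FusionAux
variable {L : Type*} [Fintype L] [DecidableEq L]

theorem fusion_pair' (N : L → L → L → ℕ) (e : L) (dual : L → L)
    (hdual : ∀ i, dual (dual i) = i)
    (hpair : ∀ i j, N i j e = if i = dual j then 1 else 0) :
    ∀ i j, N i j e = if j = dual i then 1 else 0 := by
  intro i j
  rw [hpair]
  by_cases h : j = dual i
  · subst h; simp [hdual]
  · have h2 : ¬ (i = dual j) := fun hh => h (by rw [hh, hdual])
    simp [h, h2]

theorem fusion_I1 (N : L → L → L → ℕ) (e : L) (dual : L → L)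
    (hdual : ∀ i, dual (dual i) = i)
    (hpair : ∀ i j, N i j e = if i = dual j then 1 else 0)
    (hassoc : ∀ i j k l, ∑ m, N i j m * N m k l = ∑ m, N j k m * N i m l) :
    ∀ a b c, N a b c = N b (dual c) (dual a) := by
  intro a b c
  have h := hassoc a b (dual c) e
  have hL : ∑ m, N a b m * N m (dual c) e = N a b c := by
    have h1 : ∀ m, N m (dual c) e = if m = c then 1 else 0 := by
      intro m; rw [hpair, hdual]
    simp [h1, mul_ite]
  have hRr : ∑ m, N b (dual c) m * N a m e = N b (dual c) (dual a) := by
    have h1 : ∀ m, N a m e = if m = dual a then 1 else 0 :=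
      fun m => fusion_pair' N e dual hdual hpair a m
    simp [h1, mul_ite]
  rw [hL, hRr] at h
  exact h

theorem fusion_I2 (N : L → L → L → ℕ) (e : L) (dual : L → L)
    (hdual : ∀ i, dual (dual i) = i)
    (hcomm : ∀ i j k, N i j k = N j i k)
    (hpair : ∀ i j, N i j e = if i = dual j then 1 else 0)
    (hassoc : ∀ i j k l, ∑ m, N i j m * N m k l = ∑ m, N j k m * N i m l) :
    ∀ a b c, N a b c = N a (dual c) (dual b) := by
  intro a b c
  rw [hcomm a b c, fusion_I1 N e dual hdual hpair hassoc b a c]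

theorem fusion_pos (N : L → L → L → ℕ) (e : L) (dual : L → L)
    (hdual : ∀ i, dual (dual i) = i)
    (hcomm : ∀ i j k, N i j k = N j i k)
    (hunit : ∀ j k, N e j k = if j = k then 1 else 0)
    (hpair : ∀ i j, N i j e = if i = dual j then 1 else 0)
    (hassoc : ∀ i j k l, ∑ m, N i j m * N m k l = ∑ m, N j k m * N i m l) :
    ∀ j k, ∃ m, 0 < N m j k := by
  intro j k
  have h := hassoc k (dual j) j k
  have hge : 1 ≤ ∑ m, N (dual j) j m * N k m k := by
    have h1 : N (dual j) j e * N k e k = 1 := by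
      rw [hpair, hcomm k e k, hunit]
      simp
    calc (1:ℕ) = N (dual j) j e * N k e k := h1.symm
    _ ≤ ∑ m, N (dual j) j m * N k m k :=
        Finset.single_le_sum (f := fun m => N (dual j) j m * N k m k)
          (fun m _ => Nat.zero_le _) (mem_univ e)
  rw [← h] at hge
  by_contra hc
  push_neg at hc
  have hz : ∀ m, N m j k = 0 := fun m => Nat.le_zero.mp (hc m)
  have : ∑ m, N k (dual j) m * N m j k = 0 := by
    apply Finset.sum_eq_zero
    intro m _
    rw [hz m, mul_zero]
  rw [this] at hge
  exact Nat.not_succ_le_zero 0 hge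

end FusionAux

/-- For the Grothendieck ring of a fusion category (free `ℤ`-module on a finite label
set `L` with nonnegative integer structure constants `N_{ij}^k`), any ring homomorphism
to `ℝ` which is positive on every basis element sends each basis element `x_i` to an
eigenvalue of the fusion matrix `N_i` (with entries `(N_i)_{kj} = N_{ij}^k`); moreover
such a positive homomorphism is unique — it is the Frobenius–Perron dimension, taking
`x_i` to the spectral radius of `N_i`. -/
theorem fpdim_unique_positive_hom {L : Type*} [Fintype L] [DecidableEq L]
    (N : L → L → L → ℕ) (e : L) (dual : L → L)
    (hdual : ∀ i, dual (dual i) = i)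
    (hcomm : ∀ i j k, N i j k = N j i k)
    (hunit : ∀ j k, N e j k = if j = k then 1 else 0)
    (hpair : ∀ i j, N i j e = if i = dual j then 1 else 0)
    (hassoc : ∀ i j k l, ∑ m, N i j m * N m k l = ∑ m, N j k m * N i m l) :
    let mul : (L → ℤ) → (L → ℤ) → (L → ℤ) :=
      fun x y k => ∑ i, ∑ j, x i * y j * (N i j k : ℤ)
    let basis : L → (L → ℤ) := fun i m => if m = i then 1 else 0
    let M : L → Matrix L L ℝ := fun i => Matrix.of fun k j => (N i j k : ℝ)
    let IsPosHom : ((L → ℤ) → ℝ) → Prop := fun φ =>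
      (∀ x y, φ (x + y) = φ x + φ y) ∧ (∀ x y, φ (mul x y) = φ x * φ y) ∧
      φ (basis e) = 1 ∧ (∀ i, 0 < φ (basis i))
    (∀ φ, IsPosHom φ → ∀ i, ∃ v : L → ℝ, v ≠ 0 ∧
        (M i).mulVec v = φ (basis i) • v) ∧
    (∃! φ, IsPosHom φ) ∧
    (∀ φ, IsPosHom φ → ∀ i, ∀ μ ∈ spectrum ℂ ((M i).map (Complex.ofReal ·)),
        ‖μ‖ ≤ φ (basis i)) := by
  classical
  intro mul basis M IsPosHom
  have hNe : Nonempty L := ⟨e⟩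
  have hI2 : ∀ a b c, N a b c = N a (dual c) (dual b) :=
    fusion_I2 N e dual hdual hcomm hpair hassoc
  have hpos : ∀ j k, ∃ m, 0 < N m j k :=
    fusion_pos N e dual hdual hcomm hunit hpair hassoc
  have hperm : Function.Involutive dual := hdual
  have hmv : ∀ (i : L) (x : L → ℝ) (k : L), (M i).mulVec x k = ∑ j, (N i j k : ℝ) * x j :=
    fun i x k => rfl
  -- `φ` is determined by its values on basis elements
  have hsum : ∀ φ, IsPosHom φ → ∀ x : L → ℤ, φ x = ∑ k, (x k : ℝ) * φ (basis k) := by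
    intro φ hφ x
    obtain ⟨hadd, -, -, -⟩ := hφ
    set ψ : (L → ℤ) →+ ℝ := AddMonoidHom.mk' φ hadd with hψ
    have hx : x = ∑ k, x k • basis k := by
      funext m
      have h1 : (∑ k, x k • basis k) m = ∑ k, x k * (if m = k then 1 else 0) := by
        rw [Finset.sum_apply]
        exact Finset.sum_congr rfl fun k _ => by simp [basis, smul_eq_mul]
      rw [h1]
      simp [mul_ite]
    calc φ x = ψ (∑ k, x k • basis k) := by rw [← hx]; rfl
    _ = ∑ k, ψ (x k • basis k) := map_sum ψ _ _
    _ = ∑ k, (x k : ℝ) * φ (basis k) := by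
        refine Finset.sum_congr rfl fun k _ => ?_
        rw [map_zsmul, zsmul_eq_mul]
        rfl
  -- the multiplicative relation on basis elements
  have hkey : ∀ φ, IsPosHom φ →
      ∀ i j, ∑ k, (N i j k : ℝ) * φ (basis k) = φ (basis i) * φ (basis j) := by
    intro φ hφ i j
    have hb : mul (basis i) (basis j) = fun k => (N i j k : ℤ) := by
      funext k
      show ∑ i', ∑ j', basis i i' * basis j j' * (N i' j' k : ℤ) = (N i j k : ℤ)
      have h1 : ∀ i', ∑ j', basis i i' * basis j j' * (N i' j' k : ℤ)
          = basis i i' * (N i' j k : ℤ) := by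
        intro i'
        have : ∀ j', basis i i' * basis j j' * (N i' j' k : ℤ)
            = if j' = j then basis i i' * (N i' j' k : ℤ) else 0 := by
          intro j'
          simp only [basis]
          by_cases h : j' = j <;> simp [h, mul_comm]
        simp only [this, Finset.sum_ite_eq' univ j, mem_univ, if_true]
      simp only [h1]
      have : ∀ i', basis i i' * (N i' j k : ℤ) = if i' = i then (N i' j k : ℤ) else 0 := by
        intro i'
        simp only [basis]
        by_cases h : i' = i <;> simp [h]
      simp only [this, Finset.sum_ite_eq' univ i, mem_univ, if_true]
    have h2 := hφ.2.1 (basis i) (basis j)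
    rw [hb, hsum φ hφ (fun k => (N i j k : ℤ))] at h2
    rw [← h2]
    exact Finset.sum_congr rfl fun k _ => by push_cast; ring
  -- part 1 : explicit positive eigenvector
  have hpart1 : ∀ φ, IsPosHom φ → ∀ i,
      (M i).mulVec (fun j => φ (basis (dual j)))
        = φ (basis i) • (fun j => φ (basis (dual j))) := by
    intro φ hφ i
    funext k
    rw [hmv]
    have hstep : ∑ j, (N i j k : ℝ) * φ (basis (dual j))
        = ∑ j, (N i (dual j) k : ℝ) * φ (basis j) := by
      rw [← Equiv.sum_comp (Function.Involutive.toPerm dual hperm)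
        (fun j => (N i j k : ℝ) * φ (basis (dual j)))]
      refine Finset.sum_congr rfl fun j _ => ?_
      have h1 : (Function.Involutive.toPerm dual hperm) j = dual j := rfl
      rw [h1, hdual]
    rw [hstep]
    have hstep2 : ∑ j, (N i (dual j) k : ℝ) * φ (basis j)
        = ∑ j, (N i (dual k) j : ℝ) * φ (basis j) := by
      refine Finset.sum_congr rfl fun j _ => ?_
      have := hI2 i (dual j) k
      rw [hdual] at this
      rw [this]
    rw [hstep2, hkey φ hφ i (dual k)]
    simp [smul_eq_mul]
  -- membership in the spectrum
  have hmemspec : ∀ φ, IsPosHom φ → ∀ i,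
      ((φ (basis i) : ℝ) : ℂ) ∈ spectrum ℂ ((M i).map (Complex.ofReal ·)) := by
    intro φ hφ i
    set Mc := (M i).map (Complex.ofReal ·) with hMc
    set v : L → ℝ := fun j => φ (basis (dual j)) with hv
    set w : L → ℂ := fun j => ((v j : ℝ) : ℂ) with hw
    have hvpos : ∀ j, 0 < v j := fun j => hφ.2.2.2 (dual j)
    have hwne : w ≠ 0 := by
      intro h
      have h2 := congrFun h e
      rw [hw] at h2
      simp only [Pi.zero_apply, Complex.ofReal_eq_zero] at h2
      exact (hvpos e).ne' h2
    have hmvc : Mc.mulVec w = ((φ (basis i) : ℝ) : ℂ) • w := by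
      funext k
      have hreal := congrFun (hpart1 φ hφ i) k
      rw [hmv] at hreal
      simp only [Pi.smul_apply, smul_eq_mul] at hreal
      show ∑ j, Mc k j * w j = ((φ (basis i) : ℝ) : ℂ) * w k
      have hMcj : ∀ j, Mc k j = ((N i j k : ℝ) : ℂ) := fun j => rfl
      simp only [hMcj, hw]
      exact_mod_cast congrArg (Complex.ofReal ·) hreal
    have hdet : (algebraMap ℂ (Matrix L L ℂ) ((φ (basis i) : ℝ) : ℂ) - Mc).det = 0 := by
      rw [← Matrix.exists_mulVec_eq_zero_iff]
      refine ⟨w, hwne, ?_⟩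
      rw [Matrix.sub_mulVec, hmvc, Algebra.algebraMap_eq_smul_one,
        Matrix.smul_mulVec, Matrix.one_mulVec, sub_self]
    rw [spectrum.mem_iff, Matrix.isUnit_iff_isUnit_det, hdet]
    exact fun h => absurd h.ne_zero (by simp)
  -- part 3 : spectral bound
  have hbound : ∀ φ, IsPosHom φ → ∀ i, ∀ μ ∈ spectrum ℂ ((M i).map (Complex.ofReal ·)),
      ‖μ‖ ≤ φ (basis i) := by
    intro φ hφ i μ hμ
    set Mc := (M i).map (Complex.ofReal ·) with hMc
    have hdet : (algebraMap ℂ (Matrix L L ℂ) μ - Mc).det = 0 := by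
      by_contra hne
      exact (spectrum.mem_iff.mp hμ)
        ((Matrix.isUnit_iff_isUnit_det _).mpr (isUnit_iff_ne_zero.mpr hne))
    obtain ⟨w, hwne, hw0⟩ := Matrix.exists_mulVec_eq_zero_iff.mpr hdet
    have hwv : Mc.mulVec w = μ • w := by
      rw [Matrix.sub_mulVec, Algebra.algebraMap_eq_smul_one,
        Matrix.smul_mulVec, Matrix.one_mulVec, sub_eq_zero] at hw0
      exact hw0.symm
    set v : L → ℝ := fun j => φ (basis (dual j)) with hv
    have hvpos : ∀ j, 0 < v j := fun j => hφ.2.2.2 (dual j)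
    have hveig := hpart1 φ hφ i
    obtain ⟨k, -, hk⟩ := Finset.exists_max_image univ (fun j => ‖w j‖ / v j) ⟨e, mem_univ e⟩
    set c := ‖w k‖ / v k with hcdef
    have hcpos : 0 < c := by
      obtain ⟨j, hj⟩ := Function.ne_iff.mp hwne
      have h1 : 0 < ‖w j‖ / v j := div_pos (norm_pos_iff.mpr hj) (hvpos j)
      exact lt_of_lt_of_le h1 (hk j (mem_univ j))
    have hwle : ∀ j, ‖w j‖ ≤ c * v j := by
      intro j
      have h1 := hk j (mem_univ j)
      calc ‖w j‖ = (‖w j‖ / v j) * v j := (div_mul_cancel₀ _ (hvpos j).ne').symm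
      _ ≤ c * v j := mul_le_mul_of_nonneg_right h1 (hvpos j).le
    have hwk : ‖w k‖ = c * v k := by
      rw [hcdef, div_mul_cancel₀ _ (hvpos k).ne']
    have hmain : ‖μ‖ * (c * v k) ≤ φ (basis i) * (c * v k) := by
      have h1 : μ * w k = ∑ j, ((N i j k : ℝ) : ℂ) * w j := by
        have h2 := congrFun hwv k
        simp only [Pi.smul_apply, smul_eq_mul] at h2
        rw [← h2]
        rfl
      calc ‖μ‖ * (c * v k) = ‖μ‖ * ‖w k‖ := by rw [hwk]
      _ = ‖μ * w k‖ := (norm_mul _ _).symm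
      _ = ‖∑ j, ((N i j k : ℝ) : ℂ) * w j‖ := by rw [h1]
      _ ≤ ∑ j, ‖((N i j k : ℝ) : ℂ) * w j‖ := norm_sum_le _ _
      _ = ∑ j, (N i j k : ℝ) * ‖w j‖ := by
          refine Finset.sum_congr rfl fun j _ => ?_
          rw [norm_mul, Complex.norm_real, Real.norm_eq_abs,
            abs_of_nonneg (by positivity : (0:ℝ) ≤ (N i j k : ℝ))]
      _ ≤ ∑ j, (N i j k : ℝ) * (c * v j) := by
          refine Finset.sum_le_sum fun j _ => ?_
          exact mul_le_mul_of_nonneg_left (hwle j) (by positivity)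
      _ = c * ∑ j, (N i j k : ℝ) * v j := by rw [Finset.mul_sum]; exact Finset.sum_congr rfl fun j _ => by ring
      _ = c * (φ (basis i) * v k) := by
          have h3 := congrFun hveig k
          rw [hmv] at h3
          simp only [Pi.smul_apply, smul_eq_mul] at h3
          rw [h3]
      _ = φ (basis i) * (c * v k) := by ring
    have hcvk : 0 < c * v k := mul_pos hcpos (hvpos k)
    exact le_of_mul_le_mul_right (by linarith [hmain]) hcvk
  -- construction of the positive homomorphism via Perron-Frobenius
  have hMM : ∀ i j, M i * M j = ∑ m, (N i j m : ℝ) • M m := by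
    intro i j
    ext l k
    rw [Matrix.mul_apply]
    have hcast : (∑ m, (N i j m : ℝ) * (N m k l : ℝ)) = ∑ m, (N j k m : ℝ) * (N i m l : ℝ) := by
      exact_mod_cast hassoc i j k l
    have hMapp : ∀ i k j, M i k j = (N i j k : ℝ) := fun _ _ _ => rfl
    simp only [Matrix.sum_apply, Matrix.smul_apply, smul_eq_mul, hMapp]
    rw [hcast]
    exact Finset.sum_congr rfl fun m _ => mul_comm _ _
  have hMcomm : ∀ i j, M i * M j = M j * M i := by
    intro i j
    rw [hMM, hMM]
    exact Finset.sum_congr rfl fun m _ => by rw [hcomm i j m]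
  set A : Matrix L L ℝ := ∑ i, M i with hA
  have hApos : ∀ k j, 0 < A k j := by
    intro k j
    obtain ⟨m, hm⟩ := hpos j k
    have h1 : A k j = ∑ i, (N i j k : ℝ) := by
      rw [hA, Matrix.sum_apply]
      rfl
    rw [h1]
    exact Finset.sum_pos' (fun i _ => by positivity)
      ⟨m, mem_univ m, by exact_mod_cast hm⟩
  have hAcomm : ∀ i, M i * A = A * M i := by
    intro i
    rw [hA, Finset.mul_sum, Finset.sum_mul]
    exact Finset.sum_congr rfl fun j _ => hMcomm i j
  obtain ⟨lam, u, hlam, hu, hAu, huniq⟩ := perron_positive A hApos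
  have hMiu : ∀ i, ∃ c : ℝ, (M i).mulVec u = c • u := by
    intro i
    refine huniq _ ?_
    rw [Matrix.mulVec_mulVec, ← hAcomm i, ← Matrix.mulVec_mulVec, hAu,
      Matrix.mulVec_smul]
  choose lamb hlamb using hMiu
  have hue : 0 < u e := hu e
  have hlambe : lamb e = 1 := by
    have hMe : (M e).mulVec u = u := by
      funext k
      rw [hmv]
      have h1 : ∀ j, (N e j k : ℝ) = if j = k then 1 else 0 := by
        intro j; rw [hunit]; split <;> simp
      simp [h1, ite_mul]
    have h2 := congrFun (hlamb e) e
    rw [hMe] at h2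
    simp only [Pi.smul_apply, smul_eq_mul] at h2
    have h3 : (1 - lamb e) * u e = 0 := by linarith
    rcases mul_eq_zero.mp h3 with h | h
    · linarith
    · exact absurd h hue.ne'
  have hlambpos : ∀ i, 0 < lamb i := by
    intro i
    have h2 := congrFun (hlamb i) e
    rw [hmv] at h2
    simp only [Pi.smul_apply, smul_eq_mul] at h2
    have h1 : ∀ j, (N i j e : ℝ) = if j = dual i then 1 else 0 := by
      intro j
      rw [fusion_pair' N e dual hdual hpair i j]
      split <;> simp
    rw [Finset.sum_congr rfl (fun j _ => by rw [h1 j])] at h2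
    simp only [ite_mul, one_mul, zero_mul, Finset.sum_ite_eq' univ (dual i), mem_univ,
      if_true] at h2
    have h4 : 0 < lamb i * u e := h2 ▸ hu (dual i)
    nlinarith [hue]
  have hhom : ∀ i j, ∑ m, (N i j m : ℝ) * lamb m = lamb i * lamb j := by
    intro i j
    have h1 : (M i * M j).mulVec u = (lamb i * lamb j) • u := by
      rw [← Matrix.mulVec_mulVec, hlamb j, Matrix.mulVec_smul, hlamb i, smul_smul,
        mul_comm (lamb j)]
    have h2 : (M i * M j).mulVec u = (∑ m, (N i j m : ℝ) * lamb m) • u := by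
      funext k
      have hMapp : ∀ i k j, M i k j = (N i j k : ℝ) := fun _ _ _ => rfl
      have hL : (M i * M j).mulVec u k = ∑ m, (N i j m : ℝ) * ((M m).mulVec u k) := by
        rw [hMM]
        show ∑ j', (∑ m, (N i j m : ℝ) • M m) k j' * u j' = _
        simp only [Matrix.sum_apply, Matrix.smul_apply, smul_eq_mul, Finset.sum_mul]
        rw [Finset.sum_comm]
        refine Finset.sum_congr rfl fun m _ => ?_
        rw [hmv, Finset.mul_sum]
        refine Finset.sum_congr rfl fun j' _ => ?_
        rw [hMapp]
        ring
      rw [hL]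
      simp only [Pi.smul_apply, smul_eq_mul, Finset.sum_mul]
      refine Finset.sum_congr rfl fun m _ => ?_
      rw [hlamb m]
      simp only [Pi.smul_apply, smul_eq_mul]
      ring
    rw [h1] at h2
    have h4 := congrFun h2 e
    simp only [Pi.smul_apply, smul_eq_mul] at h4
    have h5 : (lamb i * lamb j - ∑ m, (N i j m : ℝ) * lamb m) * u e = 0 := by linarith
    rcases mul_eq_zero.mp h5 with h | h
    · linarith
    · exact absurd h hue.ne'
  set φ₀ : (L → ℤ) → ℝ := fun x => ∑ i, (x i : ℝ) * lamb i with hφ₀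
  have hφ₀b : ∀ i, φ₀ (basis i) = lamb i := by
    intro i
    rw [hφ₀]
    have h1 : ∀ m, ((basis i m : ℤ) : ℝ) * lamb m = if m = i then lamb m else 0 := by
      intro m
      simp only [basis]
      split <;> simp
    simp only [h1, Finset.sum_ite_eq' univ i, mem_univ, if_true]
  have hφ₀pos : IsPosHom φ₀ := by
    refine ⟨?_, ?_, ?_, ?_⟩
    · intro x y
      rw [hφ₀]
      simp only [Pi.add_apply]
      rw [← Finset.sum_add_distrib]
      refine Finset.sum_congr rfl fun i _ => ?_
      push_cast
      ring
    · intro x y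
      have swap : ∀ f : L → L → L → ℝ, ∑ k, ∑ i, ∑ j, f i j k = ∑ i, ∑ j, ∑ k, f i j k := by
        intro f
        rw [Finset.sum_comm]
        exact Finset.sum_congr rfl fun i _ => Finset.sum_comm
      calc φ₀ (mul x y) = ∑ k, ∑ i, ∑ j, (x i : ℝ) * (y j : ℝ) * (N i j k : ℝ) * lamb k := by
            rw [hφ₀]
            refine Finset.sum_congr rfl fun k _ => ?_
            show ((∑ i, ∑ j, x i * y j * (N i j k : ℤ) : ℤ) : ℝ) * lamb k = _
            push_cast
            rw [Finset.sum_mul]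
            exact Finset.sum_congr rfl fun i _ => by rw [Finset.sum_mul]
      _ = ∑ i, ∑ j, ∑ k, (x i : ℝ) * (y j : ℝ) * (N i j k : ℝ) * lamb k := swap _
      _ = ∑ i, ∑ j, (x i : ℝ) * (y j : ℝ) * (lamb i * lamb j) := by
            refine Finset.sum_congr rfl fun i _ => Finset.sum_congr rfl fun j _ => ?_
            rw [← hhom i j, Finset.mul_sum]
            exact Finset.sum_congr rfl fun k _ => by ring
      _ = (∑ i, (x i : ℝ) * lamb i) * (∑ j, (y j : ℝ) * lamb j) := by
            rw [Finset.sum_mul_sum]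
            exact Finset.sum_congr rfl fun i _ => Finset.sum_congr rfl fun j _ => by ring
      _ = φ₀ x * φ₀ y := rfl
    · rw [hφ₀b e, hlambe]
    · intro i
      rw [hφ₀b i]
      exact hlambpos i
  -- agreement of positive homomorphisms
  have hagree : ∀ φ ψ, IsPosHom φ → IsPosHom ψ → ∀ k, φ (basis k) ≤ ψ (basis k) := by
    intro φ ψ hφ hψ k
    have h1 := hmemspec φ hφ k
    have h2 := hbound ψ hψ k _ h1
    calc φ (basis k) ≤ |φ (basis k)| := le_abs_self _
    _ = ‖((φ (basis k) : ℝ) : ℂ)‖ := by rw [Complex.norm_real, Real.norm_eq_abs]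
    _ ≤ ψ (basis k) := h2
  have hext : ∀ φ ψ, IsPosHom φ → IsPosHom ψ → φ = ψ := by
    intro φ ψ hφ hψ
    funext x
    rw [hsum φ hφ x, hsum ψ hψ x]
    refine Finset.sum_congr rfl fun k _ => ?_
    rw [le_antisymm (hagree φ ψ hφ hψ k) (hagree ψ φ hψ hφ k)]
  refine ⟨?_, ⟨φ₀, hφ₀pos, fun ψ hψ => hext ψ φ₀ hψ hφ₀pos⟩, hbound⟩
  intro φ hφ i
  refine ⟨fun j => φ (basis (dual j)), ?_, hpart1 φ hφ i⟩
  intro h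
  have h2 := congrFun h e
  simp only [Pi.zero_apply] at h2
  exact (hφ.2.2.2 (dual e)).ne' h2
end

section
/- For a finite group G and a complex finite-dimensional representation V with character χ_V, the second Frobenius–Schur indicator ν₂(V) := (1/|G|) Σ_{g∈G} χ_V(g²) of an irreducible V equals 1, −1, or 0. -/
open Finset

noncomputable section FSAux

namespace FSAux

open LinearMap Module TensorProduct Representation

variable {V : Type*} [AddCommGroup V] [Module ℂ V] [FiniteDimensional ℂ V]

/-- Trace of swap composed with `f ⊗ g` equals trace of `g ∘ f`. -/
lemma trace_comm_comp_map (f g : V →ₗ[ℂ] V) :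
    LinearMap.trace ℂ (V ⊗[ℂ] V)
      ((TensorProduct.comm ℂ V V).toLinearMap ∘ₗ TensorProduct.map f g)
      = LinearMap.trace ℂ V (g ∘ₗ f) := by
  classical
  let b := Module.finBasis ℂ V
  let B := Basis.tensorProduct b b
  rw [trace_eq_matrix_trace ℂ B, trace_eq_matrix_trace ℂ b, Matrix.trace, Matrix.trace,
    LinearMap.toMatrix_comp b b b]
  have hdiag : ∀ p : (Fin (finrank ℂ V)) × (Fin (finrank ℂ V)),
      Matrix.diag (LinearMap.toMatrix B B
        ((TensorProduct.comm ℂ V V).toLinearMap ∘ₗ TensorProduct.map f g)) p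
      = LinearMap.toMatrix b b g p.1 p.2 * LinearMap.toMatrix b b f p.2 p.1 := by
    rintro ⟨i, j⟩
    simp [Matrix.diag, LinearMap.toMatrix_apply, B, Module.Basis.tensorProduct_apply,
      Basis.tensorProduct_repr_tmul_apply, mul_comm]
  rw [Finset.sum_congr rfl (fun p _ => hdiag p), Fintype.sum_prod_type]
  simp only [Matrix.diag, Matrix.mul_apply]

variable {G : Type*} [Group G] [Fintype G]

/-- Schur's lemma for endomorphisms. -/
lemma schur_end [Nontrivial V] (ρ : Representation ℂ G V)
    (hirr : ∀ U : Submodule ℂ V, (∀ g : G, ∀ v ∈ U, ρ g v ∈ U) → U = ⊥ ∨ U = ⊤)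
    (f : V →ₗ[ℂ] V) (hf : ∀ (g : G) (v : V), f (ρ g v) = ρ g (f v)) :
    ∃ c : ℂ, f = c • LinearMap.id := by
  obtain ⟨c, hc⟩ := Module.End.exists_eigenvalue f
  refine ⟨c, ?_⟩
  have hinv : ∀ g : G, ∀ v ∈ Module.End.eigenspace f c, ρ g v ∈ Module.End.eigenspace f c := by
    intro g v hv
    rw [Module.End.mem_eigenspace_iff] at hv ⊢
    rw [hf g v, hv, map_smul]
  rcases hirr _ hinv with h | h
  · exact absurd h hc
  · ext v
    have hv : v ∈ Module.End.eigenspace f c := h ▸ Submodule.mem_top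
    simpa [Module.End.mem_eigenspace_iff] using hv

/-- The identification `V ⊗ V ≃ Hom(V*, V)`. -/
def psi : (V ⊗[ℂ] V) ≃ₗ[ℂ] (Module.Dual ℂ V →ₗ[ℂ] V) :=
  (TensorProduct.congr (Module.evalEquiv ℂ V) (LinearEquiv.refl ℂ V)).trans
    (dualTensorHomEquiv ℂ (Module.Dual ℂ V) V)

@[simp] lemma psi_tmul (v w : V) (φ : Module.Dual ℂ V) :
    (psi (v ⊗ₜ[ℂ] w)) φ = φ v • w := by
  simp [psi, Module.evalEquiv, dualTensorHomEquiv]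

lemma psi_map (f : V →ₗ[ℂ] V) (x : V ⊗[ℂ] V) :
    psi (TensorProduct.map f f x) = f ∘ₗ (psi x) ∘ₗ f.dualMap := by
  induction x with
  | zero => simp
  | tmul v w => ext φ; simp
  | add x y hx hy =>
      rw [map_add, map_add, hx, hy, map_add]
      ext φ; simp

lemma rho_comp_L (ρ : Representation ℂ G V) {x : V ⊗[ℂ] V}
    (hx : ∀ g : G, TensorProduct.map (ρ g) (ρ g) x = x) (g : G) (φ : Module.Dual ℂ V) :
    ρ g ((psi x) φ) = (psi x) ((ρ g⁻¹).dualMap φ) := by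
  conv_lhs => rw [← hx g⁻¹, psi_map]
  simp only [LinearMap.comp_apply]
  rw [← Module.End.mul_apply, ← map_mul, mul_inv_cancel, map_one, Module.End.one_apply]

/-- Any two invariant tensors are linearly dependent. -/
lemma invariant_dep [Nontrivial V] (ρ : Representation ℂ G V)
    (hirr : ∀ U : Submodule ℂ V, (∀ g : G, ∀ v ∈ U, ρ g v ∈ U) → U = ⊥ ∨ U = ⊤)
    {x y : V ⊗[ℂ] V} (hx : ∀ g : G, TensorProduct.map (ρ g) (ρ g) x = x)
    (hy : ∀ g : G, TensorProduct.map (ρ g) (ρ g) y = y) (hx0 : x ≠ 0) :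
    ∃ c : ℂ, y = c • x := by
  set Lx := (psi x : Module.Dual ℂ V →ₗ[ℂ] V) with hLx
  set Ly := (psi y : Module.Dual ℂ V →ₗ[ℂ] V) with hLy
  -- the range of Lx is an invariant subspace
  have hrange : ∀ g : G, ∀ v ∈ LinearMap.range Lx, ρ g v ∈ LinearMap.range Lx := by
    rintro g v ⟨φ, rfl⟩
    exact ⟨(ρ g⁻¹).dualMap φ, (rho_comp_L ρ hx g φ).symm⟩
  have hLx0 : Lx ≠ 0 := fun h => hx0 (by
    apply psi.injective; rw [← hLx, h, map_zero])
  have hsurj : Function.Surjective Lx := by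
    rcases hirr _ hrange with h | h
    · exact absurd (LinearMap.range_eq_bot.mp h) hLx0
    · exact LinearMap.range_eq_top.mp h
  have hinj : Function.Injective Lx :=
    (LinearMap.injective_iff_surjective_of_finrank_eq_finrank
      (Subspace.dual_finrank_eq)).mpr hsurj
  let E : Module.Dual ℂ V ≃ₗ[ℂ] V := LinearEquiv.ofBijective Lx ⟨hinj, hsurj⟩
  -- the endomorphism Ly ∘ Lx⁻¹ commutes with ρ
  set f : V →ₗ[ℂ] V := Ly ∘ₗ (E.symm : V →ₗ[ℂ] Module.Dual ℂ V) with hf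
  have hEsymm : ∀ (g : G) (v : V), E.symm (ρ g v) = (ρ g⁻¹).dualMap (E.symm v) := by
    intro g v
    apply hinj
    have h1 : Lx (E.symm (ρ g v)) = ρ g v := E.apply_symm_apply (ρ g v)
    have h2 : Lx ((ρ g⁻¹).dualMap (E.symm v)) = ρ g (Lx (E.symm v)) :=
      (rho_comp_L ρ hx g (E.symm v)).symm
    rw [h1, h2, show Lx (E.symm v) = v from E.apply_symm_apply v]
  have hcomm : ∀ (g : G) (v : V), f (ρ g v) = ρ g (f v) := by
    intro g v
    rw [hf]
    simp only [LinearMap.comp_apply, LinearEquiv.coe_coe]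
    rw [hEsymm g v, ← rho_comp_L ρ hy g (E.symm v)]
  obtain ⟨c, hc⟩ := schur_end ρ hirr f hcomm
  refine ⟨c, ?_⟩
  apply psi.injective
  rw [map_smul, ← hLx, ← hLy]
  ext φ
  have := congrArg (fun (T : V →ₗ[ℂ] V) => T (Lx φ)) hc
  simp only [hf, LinearMap.comp_apply, LinearEquiv.coe_coe, LinearMap.smul_apply,
    LinearMap.id_apply] at this
  rw [show E.symm (Lx φ) = φ from E.symm_apply_apply φ] at this
  simpa using this

end FSAux

end FSAux

/-- Classical Frobenius–Schur theorem: for a finite group `G` and an irreducible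
finite-dimensional complex representation `ρ` on `V`, the second Frobenius–Schur
indicator `ν₂(V) = (1/|G|) Σ_{g∈G} χ_V(g²)` equals `1`, `−1`, or `0`. -/
theorem frobenius_schur_indicator {G : Type*} [Group G] [Fintype G]
    {V : Type*} [AddCommGroup V] [Module ℂ V] [FiniteDimensional ℂ V] [Nontrivial V]
    (ρ : Representation ℂ G V)
    (hirr : ∀ U : Submodule ℂ V, (∀ g : G, ∀ v ∈ U, ρ g v ∈ U) → U = ⊥ ∨ U = ⊤) :
    (Fintype.card G : ℂ)⁻¹ * ∑ g : G, LinearMap.trace ℂ V (ρ (g ^ 2)) = 1 ∨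
    (Fintype.card G : ℂ)⁻¹ * ∑ g : G, LinearMap.trace ℂ V (ρ (g ^ 2)) = -1 ∨
    (Fintype.card G : ℂ)⁻¹ * ∑ g : G, LinearMap.trace ℂ V (ρ (g ^ 2)) = 0 := by
  classical
  open LinearMap Module TensorProduct Representation FSAux in
  have hcard : (Fintype.card G : ℂ) ≠ 0 := by
    exact_mod_cast Nat.cast_ne_zero.mpr Fintype.card_ne_zero
  haveI : Invertible (Fintype.card G : ℂ) := invertibleOfNonzero hcard
  set ρ₂ : Representation ℂ G (V ⊗[ℂ] V) := ρ.tprod ρ with hρ₂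
  set τ : (V ⊗[ℂ] V) →ₗ[ℂ] (V ⊗[ℂ] V) := (TensorProduct.comm ℂ V V).toLinearMap with hτ
  set W : Submodule ℂ (V ⊗[ℂ] V) := ρ₂.invariants with hW
  set P : (V ⊗[ℂ] V) →ₗ[ℂ] (V ⊗[ℂ] V) := ρ₂.averageMap with hP
  -- τ commutes with the action
  have hτcomm : ∀ (g : G) (z : V ⊗[ℂ] V), τ (ρ₂ g z) = ρ₂ g (τ z) := by
    intro g z
    induction z with
    | zero => simp
    | tmul v w =>
        simp [hρ₂, hτ, Representation.tprod_apply, TensorProduct.map_tmul,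
          TensorProduct.comm_tmul]
    | add a b ha hb => simp only [map_add, ha, hb]
  have hττ : ∀ z : V ⊗[ℂ] V, τ (τ z) = z := by
    intro z
    induction z with
    | zero => simp
    | tmul v w => simp [hτ]
    | add a b ha hb => simp only [map_add, ha, hb]
  have hτW : ∀ z ∈ W, τ z ∈ W := by
    intro z hz g
    rw [← hτcomm g z, hz g]
  -- P averages
  have havg : P = ⅟(Fintype.card G : ℂ) • ∑ g : G, ρ₂ g := by
    rw [hP, Representation.averageMap, GroupAlgebra.average, map_smul, map_sum]
    simp [Representation.asAlgebraHom_of]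
  -- Step 1: the indicator equals trace of τ ∘ₗ P
  have step1 : LinearMap.trace ℂ (V ⊗[ℂ] V) (τ ∘ₗ P)
      = (Fintype.card G : ℂ)⁻¹ * ∑ g : G, LinearMap.trace ℂ V (ρ (g ^ 2)) := by
    rw [havg]
    have : τ ∘ₗ (⅟(Fintype.card G : ℂ) • ∑ g : G, ρ₂ g)
        = ⅟(Fintype.card G : ℂ) • ∑ g : G, (τ ∘ₗ ρ₂ g) := by
      rw [LinearMap.comp_smul]
      congr 1
      ext z
      simp [LinearMap.sum_apply]
    rw [this, map_smul, map_sum, invOf_eq_inv, smul_eq_mul]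
    congr 1
    refine Finset.sum_congr rfl fun g _ => ?_
    have : (τ ∘ₗ ρ₂ g) = (TensorProduct.comm ℂ V V).toLinearMap ∘ₗ
        TensorProduct.map (ρ g) (ρ g) := rfl
    rw [this, trace_comm_comp_map,
      show ρ g ∘ₗ ρ g = ρ (g ^ 2) by rw [pow_two, map_mul]; rfl]
  -- τ ∘ P maps into W
  have hTW : ∀ z, (τ ∘ₗ P) z ∈ W := fun z => hτW _ (ρ₂.averageMap_invariant z)
  set T' := (τ ∘ₗ P).restrict (fun z _ => hTW z) with hT'
  have step2 : LinearMap.trace ℂ W T' = LinearMap.trace ℂ (V ⊗[ℂ] V) (τ ∘ₗ P) :=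
    LinearMap.trace_restrict_eq_of_forall_mem W (τ ∘ₗ P) hTW
  -- Now analyze T'
  by_cases hWtriv : ∀ z ∈ W, z = (0 : V ⊗[ℂ] V)
  · -- W is trivial: trace is 0
    right; right
    rw [← step1, ← step2]
    have hT0 : T' = 0 := by
      apply LinearMap.ext
      intro z
      have hz0 : z = 0 := Subtype.ext (hWtriv (z : V ⊗[ℂ] V) z.2)
      rw [hz0, map_zero, map_zero]
    rw [hT0, map_zero]
  · push_neg at hWtriv
    obtain ⟨x, hxW, hx0⟩ := hWtriv
    have hxinv : ∀ g : G, TensorProduct.map (ρ g) (ρ g) x = x := hxW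
    -- τ x ∈ W so τ x = c • x
    obtain ⟨c, hc⟩ := invariant_dep ρ hirr hxinv (hτW x hxW : ∀ g : G, _) hx0
    -- c² = 1
    have hc2 : c * c = 1 := by
      have : (c * c) • x = x := by
        conv_rhs => rw [← hττ x, hc, map_smul, hc, smul_smul]
      have h := sub_eq_zero.mpr this.symm
      rw [show x - (c*c) • x = (1 - c*c) • x by rw [sub_smul, one_smul], smul_eq_zero] at h
      rcases h with h | h
      · linear_combination -h
      · exact absurd h hx0
    -- every element of W is a multiple of x, so T' = c • id
    have hdep : ∀ z ∈ W, ∃ a : ℂ, z = a • x := fun z hz =>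
      invariant_dep ρ hirr hxinv (hz : ∀ g : G, _) hx0
    have hT'eq : T' = c • LinearMap.id := by
      ext ⟨z, hz⟩
      obtain ⟨a, rfl⟩ := hdep z hz
      have hPz : P (a • x) = a • x := ρ₂.averageMap_id _ hz
      show τ (P (a • x)) = c • (a • x)
      rw [hPz, map_smul, hc, smul_smul, smul_smul, mul_comm]
    -- finrank W = 1
    have hWspan : W = Submodule.span ℂ {x} := by
      apply le_antisymm
      · intro z hz
        obtain ⟨a, rfl⟩ := hdep z hz
        exact Submodule.smul_mem _ a (Submodule.mem_span_singleton_self x)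
      · rw [Submodule.span_singleton_le_iff_mem]; exact hxW
    have hfr : finrank ℂ W = 1 := by
      rw [hWspan]; exact finrank_span_singleton hx0
    have htr : LinearMap.trace ℂ W T' = c := by
      rw [hT'eq, map_smul, LinearMap.trace_id, hfr, smul_eq_mul]
      norm_num
    rcases mul_self_eq_one_iff.mp hc2 with h | h
    · left; rw [← step1, ← step2, htr, h]
    · right; left; rw [← step1, ← step2, htr, h]
end
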